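/- One noisy power-method step error bound: let A = UΣU^⊤ + U_⊥Σ_⊥U_⊥^⊤ be symmetric PSD with σ_r > 0, let Û₀ be n×r with orthonormal columns, W an n×r noise matrix, and Ũ := AÛ₀ + W. If √(1 − dist²(Û₀,U)) > ‖Σ^{−1}U^⊤W‖ (so that U^⊤Ũ has full rank r), then for the Q factor Û of the QR decomposition of Ũ: dist(Û,U) ≤ (R·dist(Û₀,U) + σ_r^{−1}‖U_⊥^⊤W‖) / (√(1 − dist²(Û₀,U)) − ‖Σ^{−1}U^⊤W‖), where R := σ_{r+1}/σ_r. -/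

import Mathlib

open Matrix BigOperators

noncomputable def specNorm {m n : Type*} [Fintype m] [Fintype n] [DecidableEq n]
    (A : Matrix m n ℝ) : ℝ :=
  ‖LinearMap.toContinuousLinearMap (Matrix.toEuclideanLin A)‖

noncomputable def distP {n r : ℕ} (Q P : Matrix (Fin n) (Fin r) ℝ) : ℝ :=
  specNorm ((1 - Q * Qᵀ) * P)

def selMat {n : ℕ} (M : Finset (Fin n)) : Matrix (Fin n) {i // i ∈ M} ℝ :=
  fun i j => if (j : Fin n) = i then 1 else 0

noncomputable def enorm {n : ℕ} (v : Fin n → ℝ) : ℝ :=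
  Real.sqrt (∑ i, v i ^ 2)

noncomputable def smin {m n : Type*} [Fintype m] [Fintype n] [DecidableEq m] [DecidableEq n]
    (A : Matrix m n ℝ) : ℝ :=
  Real.sqrt (⨅ i, (show (Aᵀ * A).IsHermitian by
    simpa [Matrix.conjTranspose_eq_transpose_of_trivial] using
      Matrix.isHermitian_conjTranspose_mul_self A).eigenvalues i)

noncomputable def lamMax {m : Type*} [Fintype m] [DecidableEq m]
    {A : Matrix m m ℝ} (hA : A.IsHermitian) : ℝ :=
  ⨆ i, hA.eigenvalues i

noncomputable def lamMin {m : Type*} [Fintype m] [DecidableEq m]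
    {A : Matrix m m ℝ} (hA : A.IsHermitian) : ℝ :=
  ⨅ i, hA.eigenvalues i

noncomputable def eigDesc {n : ℕ} {A : Matrix (Fin n) (Fin n) ℝ} (hA : A.IsHermitian)
    (k : ℕ) : ℝ :=
  ((List.ofFn hA.eigenvalues).mergeSort (fun a b => decide (b ≤ a))).getD k 0

/-! Split `Ũ = AÛ₀ + W = U X + U_⊥ Z` with `X = Σ (UᵀÛ₀ + Σ⁻¹UᵀW)` and
`Z = Σ_⊥ U_⊥ᵀÛ₀ + U_⊥ᵀW`. The projection `I - ÛÛᵀ` kills `Ũ = ÛR`, so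
`(I - ÛÛᵀ)U = -(I - ÛÛᵀ)U_⊥ Z X⁻¹` and `dist(Û, U) ≤ ‖Z‖ ‖X⁻¹‖`.
With `G = UᵀÛ₀` one has `dist²(Û₀, U) = ‖I - GGᵀ‖`, so `σ_min(Gᵀ) ≥ √(1 - dist²(Û₀, U))`;
as `G` is square the same bound holds for `G`, which gives both
`σ_min(X) ≥ σ_r (√(1 - dist²) - ‖Σ⁻¹UᵀW‖)` and `‖U_⊥ᵀÛ₀‖ ≤ dist(Û₀, U)`, hence
`‖Z‖ ≤ σ_{r+1} dist(Û₀, U) + ‖U_⊥ᵀW‖`. -/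

open scoped Matrix.Norms.L2Operator RealInnerProductSpace

namespace Matrix

variable {l m n : Type*} [Fintype l] [Fintype m] [Fintype n]

lemma l2_opNorm_transpose [DecidableEq m] [DecidableEq n] (A : Matrix m n ℝ) :
    ‖Aᵀ‖ = ‖A‖ := by
  simpa using l2_opNorm_conjTranspose A

lemma l2_opNorm_transpose_mul_self [DecidableEq n] (A : Matrix m n ℝ) :
    ‖Aᵀ * A‖ = ‖A‖ * ‖A‖ := by
  simpa using l2_opNorm_conjTranspose_mul_self A

lemma l2_opNorm_le_of_bound [DecidableEq n] (A : Matrix m n ℝ) {c : ℝ} (hc : 0 ≤ c)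
    (h : ∀ x, ‖toEuclideanLin A x‖ ≤ c * ‖x‖) : ‖A‖ ≤ c :=
  ContinuousLinearMap.opNorm_le_bound _ hc h

lemma norm_toEuclideanLin_le [DecidableEq n] (A : Matrix m n ℝ) (x : EuclideanSpace ℝ n) :
    ‖toEuclideanLin A x‖ ≤ ‖A‖ * ‖x‖ :=
  A.l2_opNorm_mulVec x

lemma l2_opNorm_diagonal_le [DecidableEq n] {v : n → ℝ} {c : ℝ} (hc : 0 ≤ c)
    (h : ∀ i, |v i| ≤ c) : ‖diagonal v‖ ≤ c := by
  rw [l2_opNorm_diagonal]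
  exact (pi_norm_le_iff_of_nonneg hc).2 h

lemma sq_norm_toEuclideanLin [DecidableEq m] [DecidableEq n] (B : Matrix m n ℝ)
    (x : EuclideanSpace ℝ n) :
    ‖toEuclideanLin B x‖ ^ 2 = ⟪x, toEuclideanLin (Bᵀ * B) x⟫ := by
  rw [← real_inner_self_eq_norm_sq, toLpLin_mul_same, LinearMap.comp_apply,
    ← conjTranspose_eq_transpose_of_trivial, toEuclideanLin_conjTranspose_eq_adjoint,
    LinearMap.adjoint_inner_right]

lemma sq_norm_add_sq_norm_of_add_mul_transpose_eq_one [DecidableEq l] [DecidableEq m]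
    [DecidableEq n] {U : Matrix n m ℝ} {V : Matrix n l ℝ} (h : U * Uᵀ + V * Vᵀ = 1)
    (v : EuclideanSpace ℝ n) :
    ‖toEuclideanLin Uᵀ v‖ ^ 2 + ‖toEuclideanLin Vᵀ v‖ ^ 2 = ‖v‖ ^ 2 := by
  rw [sq_norm_toEuclideanLin, sq_norm_toEuclideanLin, ← inner_add_right, ← LinearMap.add_apply,
    ← map_add, transpose_transpose, transpose_transpose, h, toLpLin_one, LinearMap.id_apply,
    real_inner_self_eq_norm_sq]

lemma norm_toEuclideanLin_of_transpose_mul_self_eq_one [DecidableEq m] [DecidableEq n]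
    {Q : Matrix m n ℝ} (hQ : Qᵀ * Q = 1) (x : EuclideanSpace ℝ n) :
    ‖toEuclideanLin Q x‖ = ‖x‖ := by
  have h := sq_norm_toEuclideanLin Q x
  rw [hQ, toLpLin_one, LinearMap.id_apply, real_inner_self_eq_norm_sq] at h
  exact (sq_eq_sq₀ (norm_nonneg _) (norm_nonneg _)).1 h

lemma one_sub_l2_opNorm_mul_sq_norm_le [DecidableEq m] [DecidableEq n] (B : Matrix m n ℝ)
    (x : EuclideanSpace ℝ n) :
    (1 - ‖1 - Bᵀ * B‖) * ‖x‖ ^ 2 ≤ ‖toEuclideanLin B x‖ ^ 2 := by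
  have h := real_inner_le_norm x (toEuclideanLin (1 - Bᵀ * B) x)
  grw [norm_toEuclideanLin_le] at h
  rw [map_sub, LinearMap.sub_apply, toLpLin_one, LinearMap.id_apply, inner_sub_right,
    real_inner_self_eq_norm_sq] at h
  rw [sq_norm_toEuclideanLin]
  nlinarith

lemma isStarProjection_mul_transpose [DecidableEq n] {Q : Matrix m n ℝ} (hQ : Qᵀ * Q = 1) :
    IsStarProjection (Q * Qᵀ) where
  isIdempotentElem := by
    rw [IsIdempotentElem, Matrix.mul_assoc, ← Matrix.mul_assoc Qᵀ, hQ, Matrix.one_mul]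
  isSelfAdjoint := by
    rw [IsSelfAdjoint, star_eq_conjTranspose, conjTranspose_eq_transpose_of_trivial,
      transpose_mul, transpose_transpose]

lemma l2_opNorm_one_sub_mul_transpose_le [DecidableEq m] [DecidableEq n] {Q : Matrix m n ℝ}
    (hQ : Qᵀ * Q = 1) : ‖1 - Q * Qᵀ‖ ≤ 1 :=
  (isStarProjection_mul_transpose hQ).one_sub.norm_le

lemma l2_opNorm_le_one_of_transpose_mul_self_eq_one [DecidableEq m] [DecidableEq n]
    {Q : Matrix m n ℝ} (hQ : Qᵀ * Q = 1) : ‖Q‖ ≤ 1 := by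
  have h : ‖Q‖ * ‖Q‖ ≤ 1 := by
    rw [← l2_opNorm_transpose Q, ← l2_opNorm_transpose_mul_self, transpose_transpose]
    exact (isStarProjection_mul_transpose hQ).norm_le
  nlinarith [norm_nonneg Q]

/-- `BoundedBelowBy B c` says `σ_min(B) ≥ c`. -/
def BoundedBelowBy [DecidableEq n] (B : Matrix m n ℝ) (c : ℝ) : Prop :=
  ∀ x, c * ‖x‖ ≤ ‖toEuclideanLin B x‖

lemma boundedBelowBy_of_l2_opNorm_inv_le [DecidableEq n] {B : Matrix n n ℝ} {c : ℝ}
    (hc : 0 < c) (hdet : IsUnit B.det) (hinv : ‖B⁻¹‖ ≤ c⁻¹) : BoundedBelowBy B c := by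
  intro x
  have h := norm_toEuclideanLin_le B⁻¹ (toEuclideanLin B x)
  rw [← LinearMap.comp_apply, ← toLpLin_mul_same, nonsing_inv_mul _ hdet, toLpLin_one,
    LinearMap.id_apply] at h
  grw [hinv] at h
  exact (le_inv_mul_iff₀ hc).1 h

namespace BoundedBelowBy

lemma add [DecidableEq n] {B : Matrix m n ℝ} {c : ℝ} (hB : BoundedBelowBy B c)
    (E : Matrix m n ℝ) : BoundedBelowBy (B + E) (c - ‖E‖) := by
  intro x
  have h := norm_sub_norm_le (toEuclideanLin B x) (-toEuclideanLin E x)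
  rw [norm_neg, sub_neg_eq_add, ← LinearMap.add_apply, ← map_add] at h
  nlinarith [hB x, norm_toEuclideanLin_le E x]

lemma mul [DecidableEq m] [DecidableEq n] {A : Matrix l m ℝ} {B : Matrix m n ℝ} {a b : ℝ}
    (hA : BoundedBelowBy A a) (hB : BoundedBelowBy B b) (ha : 0 ≤ a) :
    BoundedBelowBy (A * B) (a * b) := by
  intro x
  rw [toLpLin_mul_same, LinearMap.comp_apply, mul_assoc]
  exact (mul_le_mul_of_nonneg_left (hB x) ha).trans (hA _)

lemma isUnit_det [DecidableEq n] {B : Matrix n n ℝ} {c : ℝ} (hB : BoundedBelowBy B c)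
    (hc : 0 < c) : IsUnit B.det := by
  by_contra hdet
  obtain ⟨v, hv, hBv⟩ := exists_mulVec_eq_zero_iff.2 (by simpa [isUnit_iff_ne_zero] using hdet)
  have h := hB (WithLp.toLp 2 v)
  rw [toLpLin_toLp, toLin'_apply, hBv, WithLp.toLp_zero, norm_zero] at h
  have hv' : 0 < ‖WithLp.toLp 2 v‖ := norm_pos_iff.2 (by simpa using hv)
  nlinarith

lemma l2_opNorm_inv_le [DecidableEq n] {B : Matrix n n ℝ} {c : ℝ} (hB : BoundedBelowBy B c)
    (hc : 0 < c) : ‖B⁻¹‖ ≤ c⁻¹ := by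
  refine l2_opNorm_le_of_bound _ (inv_nonneg.2 hc.le) fun y => ?_
  have h := hB (toEuclideanLin B⁻¹ y)
  rw [← LinearMap.comp_apply, ← toLpLin_mul_same, mul_nonsing_inv _ (hB.isUnit_det hc),
    toLpLin_one, LinearMap.id_apply] at h
  rw [le_inv_mul_iff₀ hc]
  exact h

lemma of_transpose [DecidableEq n] {B : Matrix n n ℝ} {c : ℝ} (hB : BoundedBelowBy Bᵀ c)
    (hc : 0 < c) : BoundedBelowBy B c := by
  refine boundedBelowBy_of_l2_opNorm_inv_le hc (by simpa using hB.isUnit_det hc) ?_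
  rw [← l2_opNorm_transpose, transpose_nonsing_inv]
  exact hB.l2_opNorm_inv_le hc

end BoundedBelowBy

lemma boundedBelowBy_diagonal [DecidableEq n] {σ : n → ℝ} {c : ℝ} (hc : 0 < c)
    (hσ : ∀ i, c ≤ σ i) : BoundedBelowBy (diagonal σ) c := by
  have hσ0 : ∀ i, 0 < σ i := fun i => hc.trans_le (hσ i)
  have hleft : diagonal σ⁻¹ * diagonal σ = 1 := by
    rw [diagonal_mul_diagonal, ← diagonal_one]
    congr 1
    funext i
    exact inv_mul_cancel₀ (hσ0 i).ne'
  refine boundedBelowBy_of_l2_opNorm_inv_le hc (isUnit_det_of_left_inverse hleft) ?_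
  rw [inv_eq_left_inv hleft]
  refine l2_opNorm_diagonal_le (inv_nonneg.2 hc.le) fun i => ?_
  rw [Pi.inv_apply, abs_of_pos (inv_pos.2 (hσ0 i))]
  exact inv_anti₀ hc (hσ i)

lemma transpose_mul_self_one_sub_mul_transpose_mul {k : Type*} [DecidableEq m]
    [DecidableEq n] {Q : Matrix m n ℝ} (hQ : Qᵀ * Q = 1) (U : Matrix m k ℝ) :
    ((1 - Q * Qᵀ) * U)ᵀ * ((1 - Q * Qᵀ) * U) = Uᵀ * U - (Uᵀ * Q) * (Uᵀ * Q)ᵀ := by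
  have hP := (isStarProjection_mul_transpose hQ).one_sub
  calc ((1 - Q * Qᵀ) * U)ᵀ * ((1 - Q * Qᵀ) * U)
      = Uᵀ * (star (1 - Q * Qᵀ) * (1 - Q * Qᵀ)) * U := by
        simp only [transpose_mul, star_eq_conjTranspose, conjTranspose_eq_transpose_of_trivial,
          Matrix.mul_assoc]
    _ = Uᵀ * U - (Uᵀ * Q) * (Uᵀ * Q)ᵀ := by
        rw [hP.isSelfAdjoint.star_eq, hP.isIdempotentElem.eq]
        simp only [Matrix.mul_sub, Matrix.sub_mul, Matrix.mul_one, transpose_mul,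
          transpose_transpose, Matrix.mul_assoc]

end Matrix

lemma specNorm_eq_l2_opNorm {m n : Type*} [Fintype m] [Fintype n] [DecidableEq n]
    (A : Matrix m n ℝ) : specNorm A = ‖A‖ :=
  rfl

section SubspaceDistance

variable {n r : ℕ} {k : Type*} [Fintype k] [DecidableEq k] {Q U : Matrix (Fin n) (Fin r) ℝ}

lemma distP_eq_l2_opNorm (Q U : Matrix (Fin n) (Fin r) ℝ) :
    distP Q U = ‖(1 - Q * Qᵀ) * U‖ :=
  rfl

lemma distP_nonneg (Q U : Matrix (Fin n) (Fin r) ℝ) : 0 ≤ distP Q U :=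
  norm_nonneg _

lemma distP_sq (hQ : Qᵀ * Q = 1) (hU : Uᵀ * U = 1) :
    distP Q U ^ 2 = ‖1 - (Uᵀ * Q) * (Uᵀ * Q)ᵀ‖ := by
  rw [distP_eq_l2_opNorm, sq, ← l2_opNorm_transpose_mul_self,
    transpose_mul_self_one_sub_mul_transpose_mul hQ, hU]

lemma distP_eq_zero_of_mul_transpose_eq_one (hQ : Qᵀ * Q = 1) (hU : Uᵀ * U = 1)
    (hU' : U * Uᵀ = 1) : distP Q U = 0 := by
  have hG : (Uᵀ * Q)ᵀ * (Uᵀ * Q) = 1 := by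
    rw [transpose_mul, transpose_transpose, Matrix.mul_assoc, ← Matrix.mul_assoc U, hU',
      Matrix.one_mul, hQ]
  have h := distP_sq hQ hU
  rw [mul_eq_one_comm.1 hG, sub_self, norm_zero] at h
  exact pow_eq_zero_iff two_ne_zero |>.1 h

lemma boundedBelowBy_transpose_mul_of_distP_lt_one (hQ : Qᵀ * Q = 1) (hU : Uᵀ * U = 1)
    (hd : distP Q U < 1) : BoundedBelowBy (Uᵀ * Q) √(1 - distP Q U ^ 2) := by
  have hd2 : 0 < 1 - distP Q U ^ 2 := by nlinarith [distP_nonneg Q U]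
  refine BoundedBelowBy.of_transpose (fun x => ?_) (Real.sqrt_pos.2 hd2)
  have h := one_sub_l2_opNorm_mul_sq_norm_le (Uᵀ * Q)ᵀ x
  rw [transpose_transpose, ← distP_sq hQ hU] at h
  rw [← sq_le_sq₀ (by positivity) (norm_nonneg _), mul_pow, Real.sq_sqrt hd2.le]
  exact h

lemma l2_opNorm_transpose_mul_le_distP {V : Matrix (Fin n) k ℝ} (hcomp : U * Uᵀ + V * Vᵀ = 1)
    (hQ : Qᵀ * Q = 1) (hU : Uᵀ * U = 1) (hd : distP Q U < 1) : ‖Vᵀ * Q‖ ≤ distP Q U := by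
  refine l2_opNorm_le_of_bound _ (distP_nonneg Q U) fun x => ?_
  have hsplit := sq_norm_add_sq_norm_of_add_mul_transpose_eq_one hcomp (toEuclideanLin Q x)
  have hlow := boundedBelowBy_transpose_mul_of_distP_lt_one hQ hU hd x
  rw [norm_toEuclideanLin_of_transpose_mul_self_eq_one hQ] at hsplit
  rw [toLpLin_mul_same, LinearMap.comp_apply] at hlow ⊢
  rw [← sq_le_sq₀ (by positivity) (norm_nonneg _), mul_pow,
    Real.sq_sqrt (by nlinarith [distP_nonneg Q U])] at hlow
  rw [← sq_le_sq₀ (norm_nonneg _) (mul_nonneg (distP_nonneg Q U) (norm_nonneg x)), mul_pow]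
  nlinarith

lemma l2_opNorm_diagonal_mul_transpose_mul_le {V : Matrix (Fin n) k ℝ} {v : k → ℝ} {c : ℝ}
    (hcomp : U * Uᵀ + V * Vᵀ = 1) (hQ : Qᵀ * Q = 1) (hU : Uᵀ * U = 1) (hd : distP Q U < 1)
    (hv : ∀ i, 0 ≤ v i) (hvc : ∀ i, v i ≤ c) :
    ‖diagonal v * (Vᵀ * Q)‖ ≤ c * distP Q U := by
  -- with no orthogonal complement `c` may be negative, but then `U` is square and `distP Q U = 0`
  rcases isEmpty_or_nonempty k with hk | ⟨⟨i⟩⟩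
  · have hVV : V * Vᵀ = 0 := by
      ext
      simp [mul_apply]
    rw [Subsingleton.elim (diagonal v * (Vᵀ * Q)) 0, norm_zero,
      distP_eq_zero_of_mul_transpose_eq_one hQ hU (by rwa [hVV, add_zero] at hcomp), mul_zero]
  · have hc : 0 ≤ c := (hv i).trans (hvc i)
    have hdiag : ‖diagonal v‖ ≤ c :=
      l2_opNorm_diagonal_le hc fun j => (abs_of_nonneg (hv j)).trans_le (hvc j)
    calc ‖diagonal v * (Vᵀ * Q)‖ ≤ ‖diagonal v‖ * ‖Vᵀ * Q‖ := l2_opNorm_mul _ _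
      _ ≤ c * distP Q U := by
        gcongr
        exact l2_opNorm_transpose_mul_le_distP hcomp hQ hU hd

lemma distP_le_of_mul_eq_add {V : Matrix (Fin n) k ℝ} {R X : Matrix (Fin r) (Fin r) ℝ}
    {Z : Matrix k (Fin r) ℝ} (hQ : Qᵀ * Q = 1) (hV : Vᵀ * V = 1) (hX : IsUnit X.det)
    (h : Q * R = U * X + V * Z) : distP Q U ≤ ‖Z‖ * ‖X⁻¹‖ := by
  set P : Matrix (Fin n) (Fin n) ℝ := 1 - Q * Qᵀ
  have hPQ : P * Q = 0 := by
    rw [Matrix.sub_mul, Matrix.one_mul, Matrix.mul_assoc, hQ, Matrix.mul_one, sub_self]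
  have hPUX : P * U * X = -(P * V * Z) := by
    refine eq_neg_of_add_eq_zero_left ?_
    rw [Matrix.mul_assoc, Matrix.mul_assoc, ← Matrix.mul_add, ← h, ← Matrix.mul_assoc, hPQ,
      Matrix.zero_mul]
  have hPU : P * U = -(P * V * Z * X⁻¹) := by
    rw [← Matrix.mul_one (P * U), ← mul_nonsing_inv X hX, ← Matrix.mul_assoc, hPUX,
      Matrix.neg_mul]
  rw [distP_eq_l2_opNorm, hPU, norm_neg]
  calc ‖P * V * Z * X⁻¹‖ ≤ ‖P‖ * ‖V‖ * ‖Z‖ * ‖X⁻¹‖ := by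
        grw [l2_opNorm_mul, l2_opNorm_mul, l2_opNorm_mul]
    _ ≤ 1 * 1 * ‖Z‖ * ‖X⁻¹‖ := by
        grw [l2_opNorm_one_sub_mul_transpose_le hQ,
          l2_opNorm_le_one_of_transpose_mul_self_eq_one hV]
    _ = ‖Z‖ * ‖X⁻¹‖ := by ring

end SubspaceDistance

theorem noisy_PM_one_step_general
    {n r : ℕ} (A : Matrix (Fin n) (Fin n) ℝ)
    (U Uhat0 Uhat W : Matrix (Fin n) (Fin r) ℝ)
    (Uperp : Matrix (Fin n) (Fin (n - r)) ℝ)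
    (Rm : Matrix (Fin r) (Fin r) ℝ)
    (σ : Fin r → ℝ) (σp : Fin (n - r) → ℝ) (σr σr1 : ℝ)
    (hU : Uᵀ * U = 1) (hUp : Uperpᵀ * Uperp = 1)
    (hU0 : Uhat0ᵀ * Uhat0 = 1) (hUhat : Uhatᵀ * Uhat = 1)
    (hcomp : U * Uᵀ + Uperp * Uperpᵀ = 1)
    (hA : A = U * Matrix.diagonal σ * Uᵀ + Uperp * Matrix.diagonal σp * Uperpᵀ)
    (hσr : ∀ i, σr ≤ σ i) (hσrpos : 0 < σr)
    (hσpnn : ∀ i, 0 ≤ σp i) (hσr1 : ∀ i, σp i ≤ σr1)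
    (hQR : A * Uhat0 + W = Uhat * Rm)
    (hdenom : specNorm ((Matrix.diagonal σ)⁻¹ * (Uᵀ * W)) <
      Real.sqrt (1 - (distP Uhat0 U) ^ 2)) :
    distP Uhat U ≤
      ((σr1 / σr) * distP Uhat0 U + σr⁻¹ * specNorm (Uperpᵀ * W)) /
        (Real.sqrt (1 - (distP Uhat0 U) ^ 2) -
          specNorm ((Matrix.diagonal σ)⁻¹ * (Uᵀ * W))) := by
  simp only [specNorm_eq_l2_opNorm] at hdenom ⊢
  set d := distP Uhat0 U
  set E := (diagonal σ)⁻¹ * (Uᵀ * W)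
  have hd : d < 1 := by
    have := (norm_nonneg E).trans_lt hdenom
    nlinarith [Real.sqrt_pos.1 this, distP_nonneg Uhat0 U]
  have hdiag := boundedBelowBy_diagonal hσrpos hσr
  have hX := hdiag.mul ((boundedBelowBy_transpose_mul_of_distP_lt_one hU0 hU hd).add E) hσrpos.le
  have hpos : 0 < σr * (√(1 - d ^ 2) - ‖E‖) := mul_pos hσrpos (sub_pos.2 hdenom)
  have hdiagE : diagonal σ * E = Uᵀ * W := by
    rw [← Matrix.mul_assoc, mul_nonsing_inv _ (hdiag.isUnit_det hσrpos), Matrix.one_mul]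
  have hsplit : Uhat * Rm = U * (diagonal σ * (Uᵀ * Uhat0 + E))
      + Uperp * (diagonal σp * (Uperpᵀ * Uhat0) + Uperpᵀ * W) := by
    rw [← hQR, Matrix.mul_add (diagonal σ), hdiagE, hA]
    nth_rewrite 1 [← Matrix.one_mul W, ← hcomp]
    simp only [Matrix.add_mul, Matrix.mul_add, Matrix.mul_assoc]
    abel
  set X := diagonal σ * (Uᵀ * Uhat0 + E)
  set Z := diagonal σp * (Uperpᵀ * Uhat0) + Uperpᵀ * W
  have hZ : ‖Z‖ ≤ σr1 * d + ‖Uperpᵀ * W‖ := by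
    grw [norm_add_le, l2_opNorm_diagonal_mul_transpose_mul_le hcomp hU0 hU hd hσpnn hσr1]
  calc distP Uhat U ≤ ‖Z‖ * ‖X⁻¹‖ := distP_le_of_mul_eq_add hUhat hUp (hX.isUnit_det hpos) hsplit
    _ ≤ (σr1 * d + ‖Uperpᵀ * W‖) * (σr * (√(1 - d ^ 2) - ‖E‖))⁻¹ :=
        mul_le_mul hZ (hX.l2_opNorm_inv_le hpos) (norm_nonneg _) ((norm_nonneg _).trans hZ)
    _ = _ := by field_simp

theorem noisy_PM_one_step
    {n r : ℕ} (A : Matrix (Fin n) (Fin n) ℝ)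
    (U Uhat0 Uhat W : Matrix (Fin n) (Fin r) ℝ)
    (Uperp : Matrix (Fin n) (Fin (n - r)) ℝ)
    (Rm : Matrix (Fin r) (Fin r) ℝ)
    (σ : Fin r → ℝ) (σp : Fin (n - r) → ℝ) (σr σr1 : ℝ)
    (hU : Uᵀ * U = 1) (hUp : Uperpᵀ * Uperp = 1)
    (hU0 : Uhat0ᵀ * Uhat0 = 1) (hUhat : Uhatᵀ * Uhat = 1)
    (horth : Uᵀ * Uperp = 0)
    (hcomp : U * Uᵀ + Uperp * Uperpᵀ = 1)
    (hA : A = U * Matrix.diagonal σ * Uᵀ + Uperp * Matrix.diagonal σp * Uperpᵀ)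
    (hσr : ∀ i, σr ≤ σ i) (hσrpos : 0 < σr)
    (hσpnn : ∀ i, 0 ≤ σp i) (hσr1 : ∀ i, σp i ≤ σr1)
    (hQR : A * Uhat0 + W = Uhat * Rm)
    (hdenom : specNorm ((Matrix.diagonal σ)⁻¹ * (Uᵀ * W)) <
      Real.sqrt (1 - (distP Uhat0 U) ^ 2)) :
    distP Uhat U ≤
      ((σr1 / σr) * distP Uhat0 U + σr⁻¹ * specNorm (Uperpᵀ * W)) /
        (Real.sqrt (1 - (distP Uhat0 U) ^ 2) -
          specNorm ((Matrix.diagonal σ)⁻¹ * (Uᵀ * W))) :=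
  noisy_PM_one_step_general A U Uhat0 Uhat W Uperp Rm σ σp σr σr1 hU hUp hU0 hUhat hcomp hA hσr
    hσrpos hσpnn hσr1 hQR hdenom
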